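/- For every positive integer m there exists δ₀ > 0 such that for every δ with 0 < δ < δ₀ and all integers j, k with 1 ≤ j ≤ m and 1 ≤ k ≤ m, the point v(j,k) − w₋(j) + (0, 0, −δ) belongs to (K + (0, 0, −δ)) ∩ (K + (−w₋(j))) ∩ (K + (w₊(k) + w₊(k+1) − u₁)). -/

import Mathlib

open Pointwise

/-- `w₋(j) = (0, −∑_{t=1}^{j} 1/t², ∑_{t=1}^{j} 1/t³)`. -/
noncomputable def wM (j : ℕ) : Fin 3 → ℝ :=
  ![0, -(∑ t ∈ Finset.Icc 1 j, (1 : ℝ) / (t : ℝ) ^ 2),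
    ∑ t ∈ Finset.Icc 1 j, (1 : ℝ) / (t : ℝ) ^ 3]

/-- `w₊(k) = (∑_{t=1}^{k} 1/t², ∑_{t=1}^{k} 1/t³, 0)`. -/
noncomputable def wP (k : ℕ) : Fin 3 → ℝ :=
  ![∑ t ∈ Finset.Icc 1 k, (1 : ℝ) / (t : ℝ) ^ 2,
    ∑ t ∈ Finset.Icc 1 k, (1 : ℝ) / (t : ℝ) ^ 3, 0]

/-- `ζ₂ = ∑_{t=1}^{∞} 1/t²`. -/
noncomputable def zeta2 : ℝ := ∑' t : ℕ, (1 : ℝ) / ((t : ℝ) + 1) ^ 2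

/-- `ζ₃ = ∑_{t=1}^{∞} 1/t³`. -/
noncomputable def zeta3 : ℝ := ∑' t : ℕ, (1 : ℝ) / ((t : ℝ) + 1) ^ 3

/-- `u₁ = (ζ₂, −2, ζ₃)`. -/
noncomputable def uOne : Fin 3 → ℝ := ![zeta2, -2, zeta3]

/-- `u₀ = (ζ₂, −2, 0)`. -/
noncomputable def uZero : Fin 3 → ℝ := ![zeta2, -2, 0]

/-- `v(j,k) = (1/(j+1)³)·w(j,k) + (((j+1)³ − 1)/(j+1)³)·w(j,k+1)` where
`w(j,k) = w₋(j) + w₊(k)`. -/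
noncomputable def vU (j k : ℕ) : Fin 3 → ℝ :=
  ((1 : ℝ) / ((j : ℝ) + 1) ^ 3) • (wM j + wP k) +
    ((((j : ℝ) + 1) ^ 3 - 1) / ((j : ℝ) + 1) ^ 3) • (wM j + wP (k + 1))

/-- The universal convex body `K`: the closure of the convex hull of the points
`w₋(j)`, `v(j,k)`, `u₀ − w₊(k)` and `u₁ − w₊(k)`. -/
noncomputable def KU : Set (Fin 3 → ℝ) :=
  closure (convexHull ℝ
    (Set.range wM ∪ (⋃ j : ℕ, Set.range (vU j)) ∪
     Set.range (fun k => uZero - wP k) ∪ Set.range (fun k => uOne - wP k)))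

/-! We take `δ₀ = 1`; after translating back, the three memberships say that three points lie
in `K`. The first, `v(j,k) − w₋(j)`, is a convex combination of `w₊(k) = v(0,k)` and `w₊(k+1)`.
For the other two we use that a convex set containing `q` and `q − h e₃` contains `q − δ e₃`
for `0 ≤ δ ≤ h`. For `B_j` take `q = v(j,k)` and `h = S₃(j) ≥ 1`, where
`S_p(n) = ∑_{t=1}^{n} 1/t^p`: the lower end `(x, y − S₂(j), 0)` lies in the triangle spanned
by `0`, `u₀` and `(x, y, 0) = v(j,k) − w₋(j)`, because `1 ≤ x ≤ ζ₂`, `1 ≤ y` and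
`S₂(j) ≤ ζ₂ = π²/6 ≤ 2`. For `C_k` the two ends are the same convex combination of
`u₁ − w₊(k), u₁ − w₊(k+1)`, resp. of `u₀ − w₊(k), u₀ − w₊(k+1)`, and `h = ζ₃ ≥ 1`. -/

open Finset

theorem Convex.add_smul_mem_of_le {𝕜 E : Type*} [Field 𝕜] [LinearOrder 𝕜] [IsStrictOrderedRing 𝕜]
    [AddCommGroup E] [Module 𝕜 E] {s : Set E} (hs : Convex 𝕜 s) {x v : E} {h δ : 𝕜}
    (hx : x ∈ s) (hxh : x + h • v ∈ s) (hδ : 0 ≤ δ) (hδh : δ ≤ h) : x + δ • v ∈ s := by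
  have key := hs.add_smul_mem hx hxh
    ⟨div_nonneg hδ (hδ.trans hδh), div_le_one_of_le₀ hδh (hδ.trans hδh)⟩
  rwa [smul_smul, div_mul_cancel_of_imp fun h0 => le_antisymm (h0 ▸ hδh) hδ] at key

noncomputable def zetaPartial (p n : ℕ) : ℝ := ∑ t ∈ Icc 1 n, (1 : ℝ) / (t : ℝ) ^ p

lemma zetaPartial_nonneg (p n : ℕ) : 0 ≤ zetaPartial p n :=
  sum_nonneg fun _ _ => by positivity

lemma one_le_zetaPartial (p : ℕ) {n : ℕ} (hn : 1 ≤ n) : 1 ≤ zetaPartial p n := by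
  simpa [zetaPartial] using single_le_sum (f := fun t : ℕ => (1 : ℝ) / (t : ℝ) ^ p)
    (fun _ _ => by positivity) (mem_Icc.2 ⟨le_rfl, hn⟩)

lemma zetaPartial_le_tsum {p : ℕ} (hp : 1 < p) (n : ℕ) :
    zetaPartial p n ≤ ∑' t : ℕ, (1 : ℝ) / ((t : ℝ) + 1) ^ p := by
  have hsum : Summable fun t : ℕ => (1 : ℝ) / ((t : ℝ) + 1) ^ p := by
    simpa using (summable_nat_add_iff 1).2 (Real.summable_one_div_nat_pow.2 hp)
  have hIcc : zetaPartial p n = ∑ t ∈ range n, (1 : ℝ) / ((t : ℝ) + 1) ^ p := by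
    rw [zetaPartial, ← Ico_add_one_right_eq_Icc, sum_Ico_eq_sum_range]
    simp [add_comm]
  rw [hIcc]
  exact hsum.sum_le_tsum _ fun _ _ => by positivity

lemma zeta2_eq : zeta2 = Real.pi ^ 2 / 6 := by
  have h := (hasSum_nat_add_iff' 1).2 hasSum_zeta_two
  simpa [zeta2] using h.tsum_eq

lemma zeta2_le_two : zeta2 ≤ 2 := by
  rw [zeta2_eq]
  nlinarith [Real.pi_lt_d2, Real.pi_pos]

lemma one_le_zeta3 : 1 ≤ zeta3 :=
  (one_le_zetaPartial 3 le_rfl).trans (zetaPartial_le_tsum (by norm_num) 1)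

lemma wM_eq (j : ℕ) : wM j = ![0, -zetaPartial 2 j, zetaPartial 3 j] := rfl

lemma wP_eq (k : ℕ) : wP k = ![zetaPartial 2 k, zetaPartial 3 k, 0] := rfl

lemma wM_zero : wM 0 = 0 := by
  ext i; fin_cases i <;> simp [wM]

lemma wP_zero : wP 0 = 0 := by
  ext i; fin_cases i <;> simp [wP]

lemma vU_sub_wM (j k : ℕ) :
    vU j k - wM j = (1 / ((j : ℝ) + 1) ^ 3) • wP k + (1 - 1 / ((j : ℝ) + 1) ^ 3) • wP (k + 1) := by
  have h : (((j : ℝ) + 1) ^ 3 - 1) / ((j : ℝ) + 1) ^ 3 = 1 - 1 / ((j : ℝ) + 1) ^ 3 := by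
    field_simp
  rw [vU, h]
  module

lemma uOne_add_smul : uOne + zeta3 • ![0, 0, -1] = uZero := by
  ext i; fin_cases i <;> simp [uOne, uZero]

lemma convex_KU : Convex ℝ KU := (convex_convexHull ℝ _).closure

lemma wM_mem_KU (j : ℕ) : wM j ∈ KU :=
  subset_closure <| subset_convexHull ℝ _ <| by simp

lemma vU_mem_KU (j k : ℕ) : vU j k ∈ KU :=
  subset_closure <| subset_convexHull ℝ _ <| by simp

lemma uZero_sub_wP_mem_KU (k : ℕ) : uZero - wP k ∈ KU :=
  subset_closure <| subset_convexHull ℝ _ <| by simp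

lemma uOne_sub_wP_mem_KU (k : ℕ) : uOne - wP k ∈ KU :=
  subset_closure <| subset_convexHull ℝ _ <| by simp

lemma zero_mem_KU : 0 ∈ KU := wM_zero ▸ wM_mem_KU 0

lemma uZero_mem_KU : uZero ∈ KU := by
  simpa [wP_zero] using uZero_sub_wP_mem_KU 0

lemma wP_mem_KU (k : ℕ) : wP k ∈ KU := by
  simpa [vU, wM_zero] using vU_mem_KU 0 k

lemma one_div_succ_pow_three_le_one (j : ℕ) : (1 : ℝ) / ((j : ℝ) + 1) ^ 3 ≤ 1 :=
  div_le_one_of_le₀ (one_le_pow₀ (by simp)) (by positivity)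

lemma vU_sub_wM_mem_KU (j k : ℕ) : vU j k - wM j ∈ KU := by
  rw [vU_sub_wM]
  exact convex_KU (wP_mem_KU k) (wP_mem_KU (k + 1)) (by positivity)
    (sub_nonneg.2 (one_div_succ_pow_three_le_one j)) (by ring)

lemma vec_snd_sub_mem_KU {x y : ℝ} (hp : ![x, y, 0] ∈ KU) (hx : 1 ≤ x) (hxz : x ≤ zeta2)
    (hy : 1 ≤ y) {s : ℝ} (hs0 : 0 ≤ s) (hs2 : s ≤ 2) : ![x, y - s, 0] ∈ KU := by
  have hz : 0 < zeta2 := by linarith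
  -- moving down along the second axis from `p` by `y + 2x/ζ₂` lands on `(x/ζ₂) u₀`
  have hu : ![x, y, 0] + (y + 2 * x / zeta2) • ![0, -1, 0] ∈ KU := by
    have h : ![x, y, 0] + (y + 2 * x / zeta2) • ![0, -1, 0] = (x / zeta2) • uZero := by
      ext i; fin_cases i <;> simp [uZero] <;> field_simp
    rw [h]
    exact convex_KU.smul_mem_of_zero_mem zero_mem_KU uZero_mem_KU
      ⟨by positivity, div_le_one_of_le₀ hxz hz.le⟩
  have hreach : 1 ≤ 2 * x / zeta2 := by
    rw [le_div_iff₀ hz]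
    linarith [zeta2_le_two]
  have h := convex_KU.add_smul_mem_of_le hp hu hs0 (by linarith)
  convert h using 1
  ext i; fin_cases i <;> simp; ring

lemma vU_add_mem_KU {j k : ℕ} (hj : 1 ≤ j) (hk : 1 ≤ k) {δ : ℝ} (hδ0 : 0 ≤ δ) (hδ1 : δ ≤ 1) :
    vU j k + ![0, 0, -δ] ∈ KU := by
  set a : ℝ := 1 / ((j : ℝ) + 1) ^ 3
  have ha0 : 0 ≤ a := by positivity
  have ha1 : 0 ≤ 1 - a := sub_nonneg.2 (one_div_succ_pow_three_le_one j)
  set x := a * zetaPartial 2 k + (1 - a) * zetaPartial 2 (k + 1)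
  set y := a * zetaPartial 3 k + (1 - a) * zetaPartial 3 (k + 1)
  have hP : vU j k - wM j = ![x, y, 0] := by
    rw [vU_sub_wM]
    ext i; fin_cases i <;> simp [wP_eq, x, y, a]
  have hx : x ∈ Set.Icc 1 zeta2 :=
    convex_Icc _ _ ⟨one_le_zetaPartial 2 hk, zetaPartial_le_tsum one_lt_two k⟩
      ⟨one_le_zetaPartial 2 (by omega), zetaPartial_le_tsum one_lt_two (k + 1)⟩ ha0 ha1 (by ring)
  have hy : y ∈ Set.Ici 1 :=
    convex_Ici _ (one_le_zetaPartial 3 hk) (one_le_zetaPartial 3 (by omega)) ha0 ha1 (by ring)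
  have hQ : ![x, y - zetaPartial 2 j, 0] ∈ KU :=
    vec_snd_sub_mem_KU (hP ▸ vU_sub_wM_mem_KU j k) hx.1 hx.2 hy (zetaPartial_nonneg 2 j)
      ((zetaPartial_le_tsum one_lt_two j).trans zeta2_le_two)
  have h := convex_KU.add_smul_mem_of_le (vU_mem_KU j k) (v := ![0, 0, -1])
    (h := zetaPartial 3 j) ?_ hδ0 (hδ1.trans (one_le_zetaPartial 3 hj))
  · convert h using 2
    ext i; fin_cases i <;> simp
  · convert hQ using 1
    rw [← sub_add_cancel (vU j k) (wM j), hP, wM_eq]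
    ext i; fin_cases i <;> simp; ring

lemma uOne_sub_wP_combo_add_mem_KU {a : ℝ} (ha0 : 0 ≤ a) (ha1 : a ≤ 1) (k : ℕ) {δ : ℝ}
    (hδ0 : 0 ≤ δ) (hδ1 : δ ≤ 1) :
    (1 - a) • (uOne - wP k) + a • (uOne - wP (k + 1)) + ![0, 0, -δ] ∈ KU := by
  have hX := convex_KU (uOne_sub_wP_mem_KU k) (uOne_sub_wP_mem_KU (k + 1))
    (sub_nonneg.2 ha1) ha0 (by ring)
  have hY := convex_KU (uZero_sub_wP_mem_KU k) (uZero_sub_wP_mem_KU (k + 1))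
    (sub_nonneg.2 ha1) ha0 (by ring)
  have h := convex_KU.add_smul_mem_of_le hX (v := ![0, 0, -1]) (h := zeta3) ?_ hδ0
    (hδ1.trans one_le_zeta3)
  · convert h using 2
    ext i; fin_cases i <;> simp
  · convert hY using 1
    rw [← uOne_add_smul]
    module

theorem witness_Ai_Bj_Ck_general (m : ℕ) :
    ∃ δ₀ : ℝ, 0 < δ₀ ∧ ∀ δ : ℝ, 0 < δ → δ < δ₀ →
      ∀ j k : ℕ, 1 ≤ j → j ≤ m → 1 ≤ k → k ≤ m →
        vU j k - wM j + ![0, 0, -δ] ∈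
          (![(0 : ℝ), 0, -δ] +ᵥ KU) ∩ ((-(wM j)) +ᵥ KU) ∩
            ((wP k + wP (k + 1) - uOne) +ᵥ KU) := by
  refine ⟨1, one_pos, fun δ hδ0 hδ1 j k hj _ hk _ => ⟨⟨?_, ?_⟩, ?_⟩⟩ <;>
    rw [Set.mem_vadd_set_iff_neg_vadd_mem, vadd_eq_add]
  · convert vU_sub_wM_mem_KU j k using 1
    abel
  · convert vU_add_mem_KU hj hk hδ0.le hδ1.le using 1
    abel
  · convert uOne_sub_wP_combo_add_mem_KU (by positivity) (one_div_succ_pow_three_le_one j) k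
      hδ0.le hδ1.le using 1
    rw [vU_sub_wM]
    module

/-- **Witness point for `A_i ∩ B_j ∩ C_k`.** For every positive integer `m` there
is `δ₀ > 0` such that for every `0 < δ < δ₀` and all `1 ≤ j ≤ m`, `1 ≤ k ≤ m`, the
point `v(j,k) − w₋(j) + (0,0,−δ)` lies in the intersection of the translates of
`K` by `(0,0,−δ)`, by `−w₋(j)`, and by `w₊(k) + w₊(k+1) − u₁`. -/
theorem witness_Ai_Bj_Ck (m : ℕ) (hm : 0 < m) :
    ∃ δ₀ : ℝ, 0 < δ₀ ∧ ∀ δ : ℝ, 0 < δ → δ < δ₀ →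
      ∀ j k : ℕ, 1 ≤ j → j ≤ m → 1 ≤ k → k ≤ m →
        vU j k - wM j + ![0, 0, -δ] ∈
          (![(0 : ℝ), 0, -δ] +ᵥ KU) ∩ ((-(wM j)) +ᵥ KU) ∩
            ((wP k + wP (k + 1) - uOne) +ᵥ KU) :=
  witness_Ai_Bj_Ck_general m
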